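/- arXiv:2005.02755 — 3 statements merged into one kernel-verified Lean document; each statement's English description precedes it below -/
import Mathlib

section
/- For every u in H¹(0,1), sup_{x ∈ [0,1]} |u(x)| ≤ c₁ ‖u‖_{H¹(0,1)}, where c₁ = (tanh 1)^(-1/2) and ‖u‖²_{H¹} = ‖u‖²_{L²} + ‖u'‖²_{L²}. -/
open MeasureTheory

/-- `u` is an `H¹` function on `(0,1)` with weak derivative `u'`. -/
def IsH1 (u u' : ℝ → ℝ) : Prop :=
  ContinuousOn u (Set.Icc 0 1) ∧
  IntervalIntegrable u' volume 0 1 ∧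
  IntervalIntegrable (fun t => u' t ^ 2) volume 0 1 ∧
  ∀ x ∈ Set.Icc (0:ℝ) 1, u x = u 0 + ∫ t in (0:ℝ)..x, u' t

/-- The constant `c₁ = (tanh 1)^(-1/2)`. -/
noncomputable def c1 : ℝ := (Real.tanh 1) ^ (-(1/2) : ℝ)

/-- The `H¹(0,1)` norm of `u` with weak derivative `u'`. -/
noncomputable def H1norm (u u' : ℝ → ℝ) : ℝ :=
  Real.sqrt ((∫ x in (0:ℝ)..1, u x ^ 2) + ∫ x in (0:ℝ)..1, u' x ^ 2)

/-!
If `ψ' = 1 - ψ²` (a Riccati equation solved by `tanh`), then for `u ∈ H¹`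
`(ψ u²)' = u² + u'² - (u' - ψ u)²`, so `ψ u²` grows on `[a, b]` by at most the `H¹` energy of `u`
there. With `ψ t = tanh t` on `[0, x]` and `ψ t = tanh (t - 1)` on `[x, 1]` this gives
`(tanh x + tanh (1 - x)) u(x)² ≤ ‖u‖²_{H¹}`, and `tanh 1 ≤ tanh x + tanh (1 - x)` by subadditivity
of `tanh` on `[0, ∞)`. The product rule for `ψ u²` holds because both factors are absolutely
continuous.
-/

open Set intervalIntegral

theorem Real.hasDerivAt_tanh (x : ℝ) : HasDerivAt Real.tanh (1 - Real.tanh x ^ 2) x := by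
  have hc := Real.cosh_pos x
  have h := (Real.hasDerivAt_sinh x).div (Real.hasDerivAt_cosh x) hc.ne'
  have e : (Real.cosh x * Real.cosh x - Real.sinh x * Real.sinh x) / Real.cosh x ^ 2
      = 1 - Real.tanh x ^ 2 := by
    rw [Real.tanh_eq_sinh_div_cosh]
    field_simp
  rwa [e, ← show Real.tanh = Real.sinh / Real.cosh from funext Real.tanh_eq_sinh_div_cosh] at h

theorem Real.tanh_add_le (a b : ℝ) (ha : 0 ≤ a) (hb : 0 ≤ b) :
    Real.tanh (a + b) ≤ Real.tanh a + Real.tanh b := by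
  have hca := Real.cosh_pos a
  have hcb := Real.cosh_pos b
  have hsa : 0 ≤ Real.sinh a := Real.sinh_nonneg_iff.mpr ha
  have hsb : 0 ≤ Real.sinh b := Real.sinh_nonneg_iff.mpr hb
  have hprod : Real.cosh a * Real.cosh b ≤ Real.cosh (a + b) := by
    rw [Real.cosh_add]; nlinarith
  simp only [Real.tanh_eq_sinh_div_cosh]
  rw [div_add_div _ _ hca.ne' hcb.ne', ← Real.sinh_add]
  gcongr

section Primitive

variable {f f' g g' : ℝ → ℝ} {a b : ℝ}

theorem IntervalIntegrable.absolutelyContinuousOnInterval_const_add_integral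
    (hf' : IntervalIntegrable f' volume a b) (c : ℝ) :
    AbsolutelyContinuousOnInterval (fun t => c + ∫ s in a..t, f' s) a b :=
  ((contDiffOn_const (c := c)).absolutelyContinuousOnInterval).add
    (hf'.absolutelyContinuousOnInterval_intervalIntegral left_mem_uIcc)

theorem IntervalIntegrable.ae_deriv_const_add_integral (hf' : IntervalIntegrable f' volume a b)
    (c : ℝ) : ∀ᵐ t, t ∈ uIcc a b → deriv (fun t => c + ∫ s in a..t, f' s) t = f' t := by
  filter_upwards [hf'.ae_hasDerivAt_integral] with t ht hmem
  exact ((ht hmem a left_mem_uIcc).const_add c).deriv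

theorem integral_deriv_mul_add_mul_deriv_eq_sub_of_eq_add_integral
    (hf' : IntervalIntegrable f' volume a b) (hg' : IntervalIntegrable g' volume a b)
    (hf : ∀ t ∈ uIcc a b, f t = f a + ∫ s in a..t, f' s)
    (hg : ∀ t ∈ uIcc a b, g t = g a + ∫ s in a..t, g' s) :
    ∫ t in a..b, (f' t * g t + f t * g' t) = f b * g b - f a * g a := by
  set F := fun t => f a + ∫ s in a..t, f' s
  set G := fun t => g a + ∫ s in a..t, g' s
  calc ∫ t in a..b, (f' t * g t + f t * g' t)
      = ∫ t in a..b, (deriv F t * G t + F t * deriv G t) := by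
        refine integral_congr_ae ?_
        filter_upwards [hf'.ae_deriv_const_add_integral (f a),
          hg'.ae_deriv_const_add_integral (g a)] with t hdF hdG ht
        have ht' := uIoc_subset_uIcc ht
        rw [hdF ht', hdG ht', hf t ht', hg t ht']
    _ = F b * G b - F a * G a :=
        (hf'.absolutelyContinuousOnInterval_const_add_integral _).integral_deriv_mul_eq_sub
          (hg'.absolutelyContinuousOnInterval_const_add_integral _)
    _ = f b * g b - f a * g a := by
        simp only [F, G, integral_same, add_zero, ← hf b right_mem_uIcc, ← hg b right_mem_uIcc]

theorem mul_eq_add_integral_of_eq_add_integral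
    (hf' : IntervalIntegrable f' volume a b) (hg' : IntervalIntegrable g' volume a b)
    (hf : ∀ t ∈ uIcc a b, f t = f a + ∫ s in a..t, f' s)
    (hg : ∀ t ∈ uIcc a b, g t = g a + ∫ s in a..t, g' s) :
    ∀ t ∈ uIcc a b, f t * g t = f a * g a + ∫ s in a..t, (f' s * g s + f s * g' s) := by
  intro t ht
  have hsub : uIcc a t ⊆ uIcc a b := uIcc_subset_uIcc left_mem_uIcc ht
  rw [integral_deriv_mul_add_mul_deriv_eq_sub_of_eq_add_integral (hf'.mono_set hsub)
    (hg'.mono_set hsub) (fun s hs => hf s (hsub hs)) (fun s hs => hg s (hsub hs))]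
  ring

theorem continuousOn_of_eq_add_integral (hf' : IntervalIntegrable f' volume a b)
    (hf : ∀ t ∈ uIcc a b, f t = f a + ∫ s in a..t, f' s) : ContinuousOn f (uIcc a b) :=
  (hf'.absolutelyContinuousOnInterval_const_add_integral (f a)).continuousOn.congr hf

theorem eq_add_integral_of_hasDerivAt (hf : ∀ t ∈ uIcc a b, HasDerivAt f (f' t) t)
    (hf' : IntervalIntegrable f' volume a b) :
    ∀ t ∈ uIcc a b, f t = f a + ∫ s in a..t, f' s := by
  intro t ht
  have hsub : uIcc a t ⊆ uIcc a b := uIcc_subset_uIcc left_mem_uIcc ht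
  rw [integral_eq_sub_of_hasDerivAt (fun s hs => hf s (hsub hs)) (hf'.mono_set hsub)]
  ring

theorem eq_add_integral_of_uIcc_subset (hf' : IntervalIntegrable f' volume a b)
    (hf : ∀ t ∈ uIcc a b, f t = f a + ∫ s in a..t, f' s) {c d : ℝ} (hcd : uIcc c d ⊆ uIcc a b) :
    ∀ t ∈ uIcc c d, f t = f c + ∫ s in c..t, f' s := by
  intro t ht
  have hc : c ∈ uIcc a b := hcd left_mem_uIcc
  rw [hf t (hcd ht), hf c hc, ← integral_add_adjacent_intervals (b := c)
    (hf'.mono_set (uIcc_subset_uIcc left_mem_uIcc hc))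
    (hf'.mono_set (uIcc_subset_uIcc hc (hcd ht)))]
  ring

end Primitive

section Riccati

variable {u u' : ℝ → ℝ} {a b : ℝ}

theorem mul_sq_sub_mul_sq_le_integral_sq_add_sq {ψ : ℝ → ℝ} (hab : a ≤ b)
    (hu' : IntervalIntegrable u' volume a b)
    (hu'2 : IntervalIntegrable (fun t => u' t ^ 2) volume a b)
    (hu : ∀ t ∈ uIcc a b, u t = u a + ∫ s in a..t, u' s)
    (hψ : ∀ t ∈ uIcc a b, HasDerivAt ψ (1 - ψ t ^ 2) t) :
    ψ b * u b ^ 2 - ψ a * u a ^ 2 ≤ ∫ t in a..b, (u t ^ 2 + u' t ^ 2) := by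
  have hu_cont := continuousOn_of_eq_add_integral hu' hu
  have hψ_cont : ContinuousOn ψ (uIcc a b) := fun t ht => (hψ t ht).continuousAt.continuousWithinAt
  have hψ' : IntervalIntegrable (fun t => 1 - ψ t ^ 2) volume a b :=
    (continuousOn_const.sub (hψ_cont.pow 2)).intervalIntegrable
  have hu_sq := mul_eq_add_integral_of_eq_add_integral hu' hu' hu hu
  have hu_sq' : IntervalIntegrable (fun s => u' s * u s + u s * u' s) volume a b :=
    (hu'.mul_continuousOn hu_cont).add (hu'.continuousOn_mul hu_cont)
  have hrep := integral_deriv_mul_add_mul_deriv_eq_sub_of_eq_add_integral hψ' hu_sq'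
    (eq_add_integral_of_hasDerivAt hψ hψ') hu_sq
  simp only [← sq] at hrep
  rw [← hrep]
  refine integral_mono_on hab ?_ ?_ fun t _ => by nlinarith [sq_nonneg (u' t - ψ t * u t)]
  · exact (hψ'.mul_continuousOn (hu_cont.pow 2)).add (hu_sq'.continuousOn_mul hψ_cont)
  · exact ((hu_cont.pow 2).intervalIntegrable).add hu'2

theorem tanh_mul_sq_right_le_integral_sq_add_sq (hab : a ≤ b)
    (hu' : IntervalIntegrable u' volume a b)
    (hu'2 : IntervalIntegrable (fun t => u' t ^ 2) volume a b)
    (hu : ∀ t ∈ uIcc a b, u t = u a + ∫ s in a..t, u' s) :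
    Real.tanh (b - a) * u b ^ 2 ≤ ∫ t in a..b, (u t ^ 2 + u' t ^ 2) := by
  simpa using mul_sq_sub_mul_sq_le_integral_sq_add_sq (ψ := fun t => Real.tanh (t - a)) hab hu'
    hu'2 hu fun t _ => (Real.hasDerivAt_tanh (t - a)).comp_sub_const t a

theorem tanh_mul_sq_left_le_integral_sq_add_sq (hab : a ≤ b)
    (hu' : IntervalIntegrable u' volume a b)
    (hu'2 : IntervalIntegrable (fun t => u' t ^ 2) volume a b)
    (hu : ∀ t ∈ uIcc a b, u t = u a + ∫ s in a..t, u' s) :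
    Real.tanh (b - a) * u a ^ 2 ≤ ∫ t in a..b, (u t ^ 2 + u' t ^ 2) := by
  have h := mul_sq_sub_mul_sq_le_integral_sq_add_sq (ψ := fun t => Real.tanh (t - b)) hab hu'
    hu'2 hu fun t _ => (Real.hasDerivAt_tanh (t - b)).comp_sub_const t b
  rwa [sub_self, Real.tanh_zero, zero_mul, zero_sub, ← neg_mul, ← Real.tanh_neg, neg_sub] at h

end Riccati

theorem abs_le_rpow_neg_half_mul_sqrt {c x S : ℝ} (hc : 0 < c) (h : c * x ^ 2 ≤ S) :
    |x| ≤ c ^ (-(1 / 2) : ℝ) * Real.sqrt S := by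
  rw [Real.rpow_neg hc.le, ← Real.sqrt_eq_rpow, ← Real.sqrt_sq_eq_abs, inv_mul_eq_div,
    ← Real.sqrt_div' _ hc.le]
  exact Real.sqrt_le_sqrt ((le_div_iff₀' hc).mpr h)

theorem sup_le_c1_H1norm (u u' : ℝ → ℝ) (hu : IsH1 u u') :
    ∀ x ∈ Set.Icc (0:ℝ) 1, |u x| ≤ c1 * H1norm u u' := by
  obtain ⟨hu_cont, hu', hu'2, hu_rep⟩ := hu
  rw [← uIcc_of_le zero_le_one] at hu_cont hu_rep
  intro x hx
  have hx' : x ∈ uIcc (0:ℝ) 1 := by rwa [uIcc_of_le zero_le_one]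
  have h0x : uIcc 0 x ⊆ uIcc (0:ℝ) 1 := uIcc_subset_uIcc left_mem_uIcc hx'
  have hx1 : uIcc x 1 ⊆ uIcc (0:ℝ) 1 := uIcc_subset_uIcc hx' right_mem_uIcc
  have hsq : IntervalIntegrable (fun t => u t ^ 2 + u' t ^ 2) volume 0 1 :=
    (hu_cont.pow 2).intervalIntegrable.add hu'2
  have hleft := tanh_mul_sq_right_le_integral_sq_add_sq hx.1 (hu'.mono_set h0x)
    (hu'2.mono_set h0x) (eq_add_integral_of_uIcc_subset hu' hu_rep h0x)
  have hright := tanh_mul_sq_left_le_integral_sq_add_sq hx.2 (hu'.mono_set hx1)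
    (hu'2.mono_set hx1) (eq_add_integral_of_uIcc_subset hu' hu_rep hx1)
  rw [sub_zero] at hleft
  have htanh : Real.tanh 1 ≤ Real.tanh x + Real.tanh (1 - x) := by
    simpa using Real.tanh_add_le x (1 - x) hx.1 (by linarith [hx.2])
  have htanh_pos : 0 < Real.tanh 1 := by
    rw [Real.tanh_eq_sinh_div_cosh]
    exact div_pos (Real.sinh_pos_iff.mpr one_pos) (Real.cosh_pos 1)
  refine abs_le_rpow_neg_half_mul_sqrt htanh_pos ?_
  rw [← integral_add (f := fun t => u t ^ 2) (hu_cont.pow 2).intervalIntegrable hu'2,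
    ← integral_add_adjacent_intervals (hsq.mono_set h0x) (hsq.mono_set hx1)]
  nlinarith [sq_nonneg (u x)]
end

section
/- Let u ∈ H²(0,1) with u'(0) = u'(1) = 0. Then for all x ∈ [0,1], √(u(x)² + u'(x)²) ≤ c₁ ‖u‖_{H²(0,1)}, where c₁ = (tanh 1)^(-1/2). -/
/-!
If `v ∈ H¹` and `g'' = g`, then `(v g)(b) - (v g)(a) = ∫ₐᵇ (g' v + g v')`, and Cauchy–Schwarz in
`ℝ²` together with `∫ₐᵇ (g'² + g²) = [g g']ₐᵇ` gives
`((v g)(b) - (v g)(a))² ≤ [g g']ₐᵇ · ∫ₐᵇ (v² + v'²)`.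
With `g = sinh` on `[0, x]` and `g = sinh (1 - ·)` on `[x, 1]` this bounds `u(x)² sinh x` and
`u(x)² sinh (1 - x)`; with `g = cosh`, `-cosh (1 - ·)` and `v = u'`, the Neumann conditions kill
the boundary terms at `0` and `1` and bound `u'(x)² cosh x` and `u'(x)² cosh (1 - x)`. Weighting
the four bounds by `cosh (1 - x)`, `cosh x`, `sinh (1 - x)`, `sinh x` and adding, the addition
formulas for `sinh 1` and `cosh 1` give `(u(x)² + u'(x)²) sinh 1 ≤ cosh 1 · ‖u‖²_{H²}`.
-/

open MeasureTheory

/-- The `H²(0,1)` norm of `u` with weak derivatives `u'`, `u''`. -/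
noncomputable def H2norm (u u' u'' : ℝ → ℝ) : ℝ :=
  Real.sqrt ((∫ x in (0:ℝ)..1, u x ^ 2) + (∫ x in (0:ℝ)..1, u' x ^ 2) +
    ∫ x in (0:ℝ)..1, u'' x ^ 2)

open Set Real

theorem sq_integral_mul_add_mul_le {f₁ f₂ g₁ g₂ : ℝ → ℝ} {a b : ℝ} (hab : a ≤ b)
    (hf : IntervalIntegrable (fun t => f₁ t ^ 2 + f₂ t ^ 2) volume a b)
    (hg : IntervalIntegrable (fun t => g₁ t ^ 2 + g₂ t ^ 2) volume a b)
    (hfg : IntervalIntegrable (fun t => f₁ t * g₁ t + f₂ t * g₂ t) volume a b) :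
    (∫ t in a..b, (f₁ t * g₁ t + f₂ t * g₂ t)) ^ 2 ≤
      (∫ t in a..b, (f₁ t ^ 2 + f₂ t ^ 2)) * ∫ t in a..b, (g₁ t ^ 2 + g₂ t ^ 2) := by
  set A := ∫ t in a..b, (f₁ t ^ 2 + f₂ t ^ 2)
  set B := ∫ t in a..b, (f₁ t * g₁ t + f₂ t * g₂ t)
  set C := ∫ t in a..b, (g₁ t ^ 2 + g₂ t ^ 2)
  have hquad : ∀ l : ℝ, 0 ≤ A * (l * l) + 2 * B * l + C := fun l => calc
    0 ≤ ∫ t in a..b, ((l * f₁ t + g₁ t) ^ 2 + (l * f₂ t + g₂ t) ^ 2) :=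
      intervalIntegral.integral_nonneg hab fun t _ => by positivity
    _ = ∫ t in a..b, (l * l * (f₁ t ^ 2 + f₂ t ^ 2) + 2 * l * (f₁ t * g₁ t + f₂ t * g₂ t) +
          (g₁ t ^ 2 + g₂ t ^ 2)) := intervalIntegral.integral_congr fun t _ => by ring
    _ = A * (l * l) + 2 * B * l + C := by
      rw [intervalIntegral.integral_add ((hf.const_mul _).add (hfg.const_mul _)) hg,
        intervalIntegral.integral_add (hf.const_mul _) (hfg.const_mul _),
        intervalIntegral.integral_const_mul, intervalIntegral.integral_const_mul]
      ring
  have := discrim_le_zero hquad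
  rw [discrim] at this
  linarith

section IsH1

variable {v v' g g' : ℝ → ℝ} {a b : ℝ}

theorem uIcc_subset_uIcc_zero_one (ha : a ∈ Icc (0:ℝ) 1) (hb : b ∈ Icc (0:ℝ) 1) :
    uIcc a b ⊆ uIcc 0 1 := by
  rw [uIcc_of_le zero_le_one]
  exact uIcc_subset_Icc ha hb

theorem IsH1.intervalIntegrable_deriv (hv : IsH1 v v') (ha : a ∈ Icc (0:ℝ) 1)
    (hb : b ∈ Icc (0:ℝ) 1) : IntervalIntegrable v' volume a b :=
  hv.2.1.mono_set (uIcc_subset_uIcc_zero_one ha hb)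

theorem IsH1.intervalIntegrable_sq_add_sq (hv : IsH1 v v') (ha : a ∈ Icc (0:ℝ) 1)
    (hb : b ∈ Icc (0:ℝ) 1) : IntervalIntegrable (fun t => v t ^ 2 + v' t ^ 2) volume a b :=
  ((hv.1.mono (uIcc_subset_Icc ha hb)).pow 2).intervalIntegrable.add
    (hv.2.2.1.mono_set (uIcc_subset_uIcc_zero_one ha hb))

theorem IsH1.integral_deriv_mul_eq_sub (hv : IsH1 v v') (hg : ∀ t, HasDerivAt g (g' t) t)
    (hg' : Continuous g') (ha : a ∈ Icc (0:ℝ) 1) (hb : b ∈ Icc (0:ℝ) 1) :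
    ∫ t in a..b, (v' t * g t + v t * g' t) = v b * g b - v a * g a := by
  obtain ⟨-, hv'int, -, hrep⟩ := hv
  set w : ℝ → ℝ := fun x => v 0 + ∫ t in (0:ℝ)..x, v' t
  have hw : ∀ x ∈ Icc (0:ℝ) 1, w x = v x := fun x hx => (hrep x hx).symm
  have hw_ac : AbsolutelyContinuousOnInterval w a b :=
    ((LipschitzWith.const (v 0)).lipschitzOnWith.absolutelyContinuousOnInterval.add
      (hv'int.absolutelyContinuousOnInterval_intervalIntegral (by simp))).mono
      (uIcc_subset_uIcc_zero_one ha hb)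
  have hg_C1 : ContDiff ℝ 1 g := contDiff_one_iff_deriv.mpr ⟨fun t => (hg t).differentiableAt,
    by rwa [show deriv g = g' from funext fun t => (hg t).deriv]⟩
  have hw_deriv : ∀ᵐ t, t ∈ uIoc a b → deriv w t * g t + w t * deriv g t =
      v' t * g t + v t * g' t := by
    filter_upwards [hv'int.ae_hasDerivAt_integral] with t hderiv ht
    have ht01 : t ∈ Icc (0:ℝ) 1 := uIcc_subset_Icc ha hb (uIoc_subset_uIcc ht)
    rw [((hderiv (by rwa [uIcc_of_le zero_le_one]) 0 (by simp)).const_add (v 0)).deriv,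
      (hg t).deriv, hw t ht01]
  rw [← intervalIntegral.integral_congr_ae hw_deriv,
    hw_ac.integral_deriv_mul_eq_sub hg_C1.contDiffOn.absolutelyContinuousOnInterval,
    hw a ha, hw b hb]

theorem IsH1.sq_mul_sub_le (hv : IsH1 v v') (hg : ∀ t, HasDerivAt g (g' t) t)
    (hg' : Continuous g') (ha : a ∈ Icc (0:ℝ) 1) (hb : b ∈ Icc (0:ℝ) 1) (hab : a ≤ b) :
    (v b * g b - v a * g a) ^ 2 ≤
      (∫ t in a..b, (g' t ^ 2 + g t ^ 2)) * ∫ t in a..b, (v t ^ 2 + v' t ^ 2) := by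
  have hgc : Continuous g := continuous_iff_continuousAt.2 fun t => (hg t).continuousAt
  have hvc : ContinuousOn v (uIcc a b) := hv.1.mono (uIcc_subset_Icc ha hb)
  rw [← hv.integral_deriv_mul_eq_sub hg hg' ha hb,
    intervalIntegral.integral_congr fun t _ => show v' t * g t + v t * g' t =
      g' t * v t + g t * v' t by ring]
  exact sq_integral_mul_add_mul_le hab (((hg'.pow 2).add (hgc.pow 2)).intervalIntegrable a b)
    (hv.intervalIntegrable_sq_add_sq ha hb)
    ((hg'.continuousOn.mul hvc).intervalIntegrable.add
      ((hv.intervalIntegrable_deriv ha hb).continuousOn_mul hgc.continuousOn))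

theorem integral_sq_add_sq_eq_of_hasDerivAt (hg : ∀ t, HasDerivAt g (g' t) t)
    (hg' : ∀ t, HasDerivAt g' (g t) t) :
    ∫ t in a..b, (g' t ^ 2 + g t ^ 2) = g b * g' b - g a * g' a := by
  have hc : Continuous g := continuous_iff_continuousAt.2 fun t => (hg t).continuousAt
  have hc' : Continuous g' := continuous_iff_continuousAt.2 fun t => (hg' t).continuousAt
  exact intervalIntegral.integral_eq_sub_of_hasDerivAt
    (fun t _ => ((hg t).mul (hg' t)).congr_deriv (by ring))
    (((hc'.pow 2).add (hc.pow 2)).intervalIntegrable a b)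

theorem IsH1.sq_mul_sub_le_of_hasDerivAt (hv : IsH1 v v') (hg : ∀ t, HasDerivAt g (g' t) t)
    (hg' : ∀ t, HasDerivAt g' (g t) t) (ha : a ∈ Icc (0:ℝ) 1) (hb : b ∈ Icc (0:ℝ) 1)
    (hab : a ≤ b) :
    (v b * g b - v a * g a) ^ 2 ≤
      (g b * g' b - g a * g' a) * ∫ t in a..b, (v t ^ 2 + v' t ^ 2) :=
  integral_sq_add_sq_eq_of_hasDerivAt hg hg' ▸
    hv.sq_mul_sub_le hg (continuous_iff_continuousAt.2 fun t => (hg' t).continuousAt) ha hb hab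

theorem sq_mul_le_of_mul_sq_le {p q r : ℝ} (hr : 0 ≤ r) (h : (p * q) ^ 2 ≤ q * r) :
    p ^ 2 * q ≤ r := by
  rcases le_or_gt q 0 with hq | hq
  · nlinarith [sq_nonneg p]
  · exact le_of_mul_le_mul_right (by nlinarith) hq

theorem hasDerivAt_sinh_one_sub (t : ℝ) :
    HasDerivAt (fun s => sinh (1 - s)) (-cosh (1 - t)) t :=
  ((hasDerivAt_id' t).const_sub 1).sinh.congr_deriv (mul_neg_one _)

theorem hasDerivAt_neg_cosh_one_sub (t : ℝ) :
    HasDerivAt (fun s => -cosh (1 - s)) (sinh (1 - t)) t :=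
  ((hasDerivAt_id' t).const_sub 1).cosh.neg.congr_deriv (by ring)

variable {x : ℝ}

theorem integral_sq_add_sq_nonneg (ha : a ≤ b) : 0 ≤ ∫ t in a..b, (v t ^ 2 + v' t ^ 2) :=
  intervalIntegral.integral_nonneg ha fun t _ => by positivity

theorem IsH1.sq_mul_sinh_le (hv : IsH1 v v') (hx : x ∈ Icc (0:ℝ) 1) :
    v x ^ 2 * sinh x ≤ cosh x * ∫ t in (0:ℝ)..x, (v t ^ 2 + v' t ^ 2) := by
  have h := hv.sq_mul_sub_le_of_hasDerivAt hasDerivAt_sinh hasDerivAt_cosh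
    (left_mem_Icc.2 zero_le_one) hx hx.1
  rw [sinh_zero] at h
  exact sq_mul_le_of_mul_sq_le (mul_nonneg (cosh_pos x).le (integral_sq_add_sq_nonneg hx.1))
    (by convert h using 1 <;> ring)

theorem IsH1.sq_mul_cosh_le (hv : IsH1 v v') (hv0 : v 0 = 0) (hx : x ∈ Icc (0:ℝ) 1) :
    v x ^ 2 * cosh x ≤ sinh x * ∫ t in (0:ℝ)..x, (v t ^ 2 + v' t ^ 2) := by
  have h := hv.sq_mul_sub_le_of_hasDerivAt hasDerivAt_cosh hasDerivAt_sinh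
    (left_mem_Icc.2 zero_le_one) hx hx.1
  rw [hv0, sinh_zero] at h
  exact sq_mul_le_of_mul_sq_le
    (mul_nonneg (sinh_nonneg_iff.2 hx.1) (integral_sq_add_sq_nonneg hx.1))
    (by convert h using 1 <;> ring)

theorem IsH1.sq_mul_sinh_one_sub_le (hv : IsH1 v v') (hx : x ∈ Icc (0:ℝ) 1) :
    v x ^ 2 * sinh (1 - x) ≤ cosh (1 - x) * ∫ t in x..1, (v t ^ 2 + v' t ^ 2) := by
  have h := hv.sq_mul_sub_le_of_hasDerivAt hasDerivAt_sinh_one_sub hasDerivAt_neg_cosh_one_sub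
    hx (right_mem_Icc.2 zero_le_one) hx.2
  rw [sub_self, sinh_zero] at h
  exact sq_mul_le_of_mul_sq_le (mul_nonneg (cosh_pos _).le (integral_sq_add_sq_nonneg hx.2))
    (by convert h using 1 <;> ring)

theorem IsH1.sq_mul_cosh_one_sub_le (hv : IsH1 v v') (hv1 : v 1 = 0) (hx : x ∈ Icc (0:ℝ) 1) :
    v x ^ 2 * cosh (1 - x) ≤ sinh (1 - x) * ∫ t in x..1, (v t ^ 2 + v' t ^ 2) := by
  have h := hv.sq_mul_sub_le_of_hasDerivAt (g := fun s => -cosh (1 - s))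
    hasDerivAt_neg_cosh_one_sub hasDerivAt_sinh_one_sub hx (right_mem_Icc.2 zero_le_one) hx.2
  rw [hv1, sub_self, sinh_zero] at h
  exact sq_mul_le_of_mul_sq_le
    (mul_nonneg (sinh_nonneg_iff.2 (sub_nonneg.2 hx.2)) (integral_sq_add_sq_nonneg hx.2))
    (by convert h using 1 <;> ring)

theorem IsH1.integral_sq_add_sq_add_adjacent (hv : IsH1 v v') (hx : x ∈ Icc (0:ℝ) 1) :
    (∫ t in (0:ℝ)..x, (v t ^ 2 + v' t ^ 2)) + ∫ t in x..1, (v t ^ 2 + v' t ^ 2) =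
      (∫ t in (0:ℝ)..1, v t ^ 2) + ∫ t in (0:ℝ)..1, v' t ^ 2 := by
  have h0 := left_mem_Icc.2 (zero_le_one' ℝ)
  have h1 := right_mem_Icc.2 (zero_le_one' ℝ)
  rw [intervalIntegral.integral_add_adjacent_intervals (hv.intervalIntegrable_sq_add_sq h0 hx)
    (hv.intervalIntegrable_sq_add_sq hx h1), intervalIntegral.integral_add
    (((hv.1.pow 2).intervalIntegrable_of_Icc zero_le_one :
      IntervalIntegrable (fun t => v t ^ 2) volume 0 1)) hv.2.2.1]

end IsH1

theorem sq_add_sq_mul_sinh_one_le {u u' u'' : ℝ → ℝ} {x : ℝ} (hu : IsH1 u u')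
    (hu' : IsH1 u' u'') (hN0 : u' 0 = 0) (hN1 : u' 1 = 0) (hx : x ∈ Icc (0:ℝ) 1) :
    (u x ^ 2 + u' x ^ 2) * sinh 1 ≤
      cosh 1 * ((∫ t in (0:ℝ)..1, u t ^ 2) + (∫ t in (0:ℝ)..1, u' t ^ 2) +
        ∫ t in (0:ℝ)..1, u'' t ^ 2) := by
  have hsinh : sinh 1 = sinh x * cosh (1 - x) + cosh x * sinh (1 - x) := by
    rw [← sinh_add, add_sub_cancel]
  have hcosh : cosh 1 = cosh x * cosh (1 - x) + sinh x * sinh (1 - x) := by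
    rw [← cosh_add, add_sub_cancel]
  have hsx := sinh_nonneg_iff.2 hx.1
  have hsy := sinh_nonneg_iff.2 (sub_nonneg.2 hx.2)
  have hcx := (cosh_pos x).le
  have hcy := (cosh_pos (1 - x)).le
  have hI0 : 0 ≤ ∫ t in (0:ℝ)..1, u t ^ 2 :=
    intervalIntegral.integral_nonneg zero_le_one fun t _ => by positivity
  have hI2 : 0 ≤ ∫ t in (0:ℝ)..1, u'' t ^ 2 :=
    intervalIntegral.integral_nonneg zero_le_one fun t _ => by positivity
  have hJ := congrArg (cosh x * cosh (1 - x) * ·) (hu.integral_sq_add_sq_add_adjacent hx)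
  have hK := congrArg (sinh x * sinh (1 - x) * ·) (hu'.integral_sq_add_sq_add_adjacent hx)
  rw [hsinh, hcosh]
  linarith [mul_le_mul_of_nonneg_right (hu.sq_mul_sinh_le hx) hcy,
    mul_le_mul_of_nonneg_right (hu.sq_mul_sinh_one_sub_le hx) hcx,
    mul_le_mul_of_nonneg_right (hu'.sq_mul_cosh_le hN0 hx) hsy,
    mul_le_mul_of_nonneg_right (hu'.sq_mul_cosh_one_sub_le hN1 hx) hsx,
    mul_nonneg (mul_nonneg hcx hcy) hI2, mul_nonneg (mul_nonneg hsx hsy) hI0]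

theorem c1_eq_sqrt_cosh_div_sinh : c1 = √(cosh 1 / sinh 1) := by
  rw [c1, tanh_eq_sinh_div_cosh, rpow_neg (div_pos (sinh_pos_iff.2 one_pos) (cosh_pos 1)).le,
    ← sqrt_eq_rpow, ← sqrt_inv, inv_div]

theorem C1norm_le_c1_H2norm (u u' u'' : ℝ → ℝ)
    (hu : IsH1 u u') (hu' : IsH1 u' u'')
    (hN0 : u' 0 = 0) (hN1 : u' 1 = 0) :
    ∀ x ∈ Set.Icc (0:ℝ) 1,
      Real.sqrt (u x ^ 2 + u' x ^ 2) ≤ c1 * H2norm u u' u'' := by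
  intro x hx
  rw [c1_eq_sqrt_cosh_div_sinh, H2norm, ← sqrt_mul (div_nonneg (cosh_pos 1).le
    (sinh_pos_iff.2 one_pos).le), div_mul_eq_mul_div]
  exact sqrt_le_sqrt ((le_div_iff₀ (sinh_pos_iff.2 one_pos)).2
    (sq_add_sq_mul_sinh_one_le hu hu' hN0 hN1 hx))
end

section
/- Let m > 1 and (a_k)_{k∈ℕ} be a real sequence with lim a_k = r ≠ 0 and a_k ≠ 0 for k ≥ m+1. Let 𝒫 : ℓ²(ℕ) → ℓ²(ℕ) be bounded linear, define G : ℓ² → ℓ² by (G(v))_k = a_k v_k − (𝒫(v))_k, let 𝒫_m = pr_m ∘ 𝒫 ∘ π_{ℝᵐ} : ℝᵐ → ℝᵐ and G_m = pr_m ∘ G ∘ pr_m, where pr_m is projection onto the first m coordinates and π_{ℝᵐ} the inclusion ℝᵐ ↪ ℓ². Then G, 𝒫_m, G_m are bounded and |λ(𝒫) − min{λ(𝒫_m), inf_{k≥m+1}|a_k|}| ≤ ‖G − G_m‖. -/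
open Classical

/-- The bijectivity modulus. -/
noncomputable def bijMod {X Y : Type*} [NormedAddCommGroup X] [NormedSpace ℝ X]
    [NormedAddCommGroup Y] [NormedSpace ℝ Y] (F : X →L[ℝ] Y) : ℝ :=
  if Function.Bijective F then ‖ContinuousLinearMap.inverse F‖⁻¹ else 0

/-!
Put `Q = G - G_m + 𝒫`, so that `Q - 𝒫 = G - G_m`. The operator `Q` acts as `𝒫_m` on the first
`m` coordinates and as multiplication by `a_k` on the others, and `ℓ²` is the orthogonal sum
of these two blocks; hence `λ(Q) = min {λ(𝒫_m), inf_{k ≥ m} |a_k|}`. The tail block is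
invertible because `a_k → r ≠ 0` and no `a_k` with `k ≥ m` vanishes, so that infimum is
positive. The claim is then `|λ(𝒫) - λ(Q)| ≤ ‖𝒫 - Q‖`, which holds because `x ↦ ‖x⁻¹‖⁻¹`
is 1-Lipschitz on a complete normed ring, extended by `0` off the units.
-/

open scoped ENNReal

local notation "ℓ²" => lp (fun _ : ℕ => ℝ) 2

section NormedRing

variable {R : Type*} [NormedRing R]

theorem Units.norm_inv_le_add_mul (u w : Rˣ) :
    ‖(↑w⁻¹ : R)‖ ≤ ‖(↑u⁻¹ : R)‖ + ‖(↑w⁻¹ : R)‖ * ‖(u : R) - w‖ * ‖(↑u⁻¹ : R)‖ :=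
  calc ‖(↑w⁻¹ : R)‖ = ‖(↑u⁻¹ : R) + ↑w⁻¹ * ((u : R) - w) * ↑u⁻¹‖ := by
        simp [mul_sub, sub_mul, mul_assoc]
    _ ≤ _ := (norm_add_le _ _).trans (by gcongr; exact norm_mul₃_le)

theorem Units.norm_inv_inv_le (u w : Rˣ) :
    ‖(↑u⁻¹ : R)‖⁻¹ ≤ ‖(↑w⁻¹ : R)‖⁻¹ + ‖(u : R) - w‖ := by
  have hAB := u.norm_inv_le_add_mul w
  have hBA := w.norm_inv_le_add_mul u
  rw [norm_sub_rev (w : R)] at hBA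
  have hA := norm_nonneg (↑u⁻¹ : R)
  have hB := norm_nonneg (↑w⁻¹ : R)
  have hd := norm_nonneg ((u : R) - w)
  generalize ‖(↑u⁻¹ : R)‖ = A, ‖(↑w⁻¹ : R)‖ = B, ‖(u : R) - w‖ = d at *
  rcases hA.eq_or_lt with rfl | hA
  · rw [inv_zero]; positivity
  rcases hB.eq_or_lt with rfl | hB
  · linarith
  calc A⁻¹ = B / (A * B) := by field_simp
    _ ≤ (A + B * d * A) / (A * B) := by gcongr
    _ = B⁻¹ + d := by field_simp

variable [CompleteSpace R]

theorem norm_ringInverse_inv_le (x y : R) :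
    ‖Ring.inverse x‖⁻¹ ≤ ‖Ring.inverse y‖⁻¹ + ‖x - y‖ := by
  by_cases hx : IsUnit x
  swap
  · rw [Ring.inverse_non_unit x hx, norm_zero, inv_zero]; positivity
  obtain ⟨u, rfl⟩ := hx
  by_cases hy : IsUnit y
  · obtain ⟨w, rfl⟩ := hy
    simpa only [Ring.inverse_unit] using u.norm_inv_inv_le w
  rw [Ring.inverse_non_unit y hy, norm_zero, inv_zero, zero_add, Ring.inverse_unit]
  by_contra! hlt
  rw [norm_sub_rev] at hlt
  exact hy ⟨u.add (y - u) hlt, by simp⟩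

end NormedRing

theorem ContinuousLinearMap.injective_of_mul_norm_le {X Y : Type*} [NormedAddCommGroup X]
    [NormedSpace ℝ X] [NormedAddCommGroup Y] [NormedSpace ℝ Y] {F : X →L[ℝ] Y} {c : ℝ}
    (hc : 0 < c) (h : ∀ x, c * ‖x‖ ≤ ‖F x‖) : Function.Injective F := by
  refine (injective_iff_map_eq_zero F).mpr fun x hx => norm_le_zero_iff.mp ?_
  have := h x
  rw [hx, norm_zero] at this
  nlinarith [norm_nonneg x]

section BijMod

variable {X : Type*} [NormedAddCommGroup X] [NormedSpace ℝ X] [CompleteSpace X]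

theorem bijMod_eq_norm_ringInverse_inv (F : X →L[ℝ] X) :
    bijMod F = ‖Ring.inverse F‖⁻¹ := by
  rw [bijMod, ContinuousLinearMap.ringInverse_eq_inverse]
  split_ifs with hF
  · rfl
  · rw [← ContinuousLinearMap.ringInverse_eq_inverse,
      Ring.inverse_non_unit _ (mt ContinuousLinearMap.isUnit_iff_bijective.mp hF), norm_zero,
      inv_zero]

theorem abs_bijMod_sub_bijMod_le (F G : X →L[ℝ] X) : |bijMod F - bijMod G| ≤ ‖F - G‖ := by
  simp only [bijMod_eq_norm_ringInverse_inv, abs_sub_le_iff]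
  constructor
  · linarith [norm_ringInverse_inv_le F G]
  · linarith [norm_ringInverse_inv_le G F, norm_sub_rev F G]

theorem bijMod_nonneg (F : X →L[ℝ] X) : 0 ≤ bijMod F := by
  rw [bijMod_eq_norm_ringInverse_inv]; positivity

theorem isUnit_of_bijMod_pos {F : X →L[ℝ] X} (hF : 0 < bijMod F) : IsUnit F := by
  by_contra h
  rw [bijMod_eq_norm_ringInverse_inv, Ring.inverse_non_unit _ h, norm_zero, inv_zero] at hF
  exact hF.false

theorem bijMod_mul_norm_le (F : X →L[ℝ] X) (x : X) : bijMod F * ‖x‖ ≤ ‖F x‖ := by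
  rw [bijMod_eq_norm_ringInverse_inv]
  by_cases hF : IsUnit F
  swap
  · rw [Ring.inverse_non_unit _ hF, norm_zero, inv_zero, zero_mul]; positivity
  rcases (norm_nonneg (Ring.inverse F)).eq_or_lt with h | h
  · rw [← h, inv_zero, zero_mul]; positivity
  rw [inv_mul_le_iff₀ h]
  calc ‖x‖ = ‖(Ring.inverse F * F) x‖ := by rw [Ring.inverse_mul_cancel _ hF]; rfl
    _ ≤ ‖Ring.inverse F‖ * ‖F x‖ := (Ring.inverse F).le_opNorm _

theorem le_bijMod_of_surjective [Nontrivial X] {F : X →L[ℝ] X} {c : ℝ}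
    (hF : Function.Surjective F) (h : ∀ x, c * ‖x‖ ≤ ‖F x‖) : c ≤ bijMod F := by
  rcases le_or_gt c 0 with hc | hc
  · exact hc.trans (bijMod_nonneg F)
  obtain ⟨u, rfl⟩ := ContinuousLinearMap.isUnit_iff_bijective.mpr
    ⟨ContinuousLinearMap.injective_of_mul_norm_le hc h, hF⟩
  rw [bijMod_eq_norm_ringInverse_inv, Ring.inverse_unit]
  have hbound : ‖(↑u⁻¹ : X →L[ℝ] X)‖ ≤ c⁻¹ := by
    refine ContinuousLinearMap.opNorm_le_bound _ (by positivity) fun y => ?_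
    rw [le_inv_mul_iff₀ hc]
    calc c * ‖(↑u⁻¹ : X →L[ℝ] X) y‖ ≤ ‖(↑(u * u⁻¹) : X →L[ℝ] X) y‖ := h _
      _ = ‖y‖ := by rw [mul_inv_cancel]; rfl
  have hpos : 0 < ‖(↑u⁻¹ : X →L[ℝ] X)‖ := norm_pos_iff.mpr (Units.ne_zero _)
  exact le_inv_of_le_inv₀ hpos hbound

theorem le_bijMod_of_finiteDimensional [FiniteDimensional ℝ X] [Nontrivial X]
    {F : X →L[ℝ] X} {c : ℝ} (h : ∀ x, c * ‖x‖ ≤ ‖F x‖) : c ≤ bijMod F := by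
  rcases le_or_gt c 0 with hc | hc
  · exact hc.trans (bijMod_nonneg F)
  exact le_bijMod_of_surjective (LinearMap.injective_iff_surjective.mp
    (ContinuousLinearMap.injective_of_mul_norm_le hc h)) h

end BijMod

theorem iInf_abs_pos_of_tendsto {b : ℕ → ℝ} {r : ℝ}
    (hb : Filter.Tendsto b Filter.atTop (nhds r)) (hr : r ≠ 0) (hb0 : ∀ k, b k ≠ 0) :
    0 < ⨅ k, |b k| := by
  obtain ⟨M, hM⟩ := (hb.abs.inv₀ (abs_ne_zero.mpr hr)).bddAbove_range
  have hbM : ∀ k, |b k|⁻¹ ≤ M := fun k => hM ⟨k, rfl⟩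
  have hM0 : 0 < M := (inv_pos.mpr (abs_pos.mpr (hb0 0))).trans_le (hbM 0)
  exact (inv_pos.mpr hM0).trans_le
    (le_ciInf fun k => inv_le_of_inv_le₀ (abs_pos.mpr (hb0 k)) (hbM k))

section Multiplier

variable {α : Type*} {p : ℝ≥0∞}

theorem norm_mul_le_norm_smul_apply {b : α → ℝ} {C : ℝ} (hb : ∀ i, |b i| ≤ C)
    (v : lp (fun _ : α => ℝ) p) (i : α) : ‖b i * v i‖ ≤ ‖(C • v) i‖ := by
  rw [lp.coeFn_smul, Pi.smul_apply, norm_smul, norm_mul, Real.norm_eq_abs, Real.norm_eq_abs]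
  gcongr
  exact (hb i).trans (le_abs_self C)

variable [Fact (1 ≤ p)]

noncomputable def mulCLM (b : α → ℝ) (C : ℝ) (hb : ∀ i, |b i| ≤ C) :
    lp (fun _ : α => ℝ) p →L[ℝ] lp (fun _ : α => ℝ) p :=
  LinearMap.mkContinuous
    { toFun := fun v =>
        ⟨fun i => b i * v i, (lp.memℓp (C • v)).mono' (norm_mul_le_norm_smul_apply hb v)⟩
      map_add' := fun v w => lp.ext <| funext fun i => mul_add _ _ _
      map_smul' := fun c v => lp.ext <| funext fun i => mul_left_comm _ _ _ }
    |C| fun v => by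
      have hp : p ≠ 0 := (zero_lt_one.trans_le Fact.out).ne'
      rw [← Real.norm_eq_abs, ← lp.norm_const_smul hp]
      exact lp.norm_mono hp (norm_mul_le_norm_smul_apply hb v)

@[simp]
theorem mulCLM_apply (b : α → ℝ) (C : ℝ) (hb : ∀ i, |b i| ≤ C)
    (v : lp (fun _ : α => ℝ) p) (i : α) : (mulCLM b C hb v : α → ℝ) i = b i * v i :=
  rfl

end Multiplier

theorem lp.norm_sq_eq_tsum_sq {α : Type*} (v : lp (fun _ : α => ℝ) 2) :
    ‖v‖ ^ 2 = ∑' i, v i ^ 2 := by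
  rw [← real_inner_self_eq_norm_sq, lp.inner_eq_tsum]
  simp [sq]

theorem lp.summable_sq {α : Type*} (v : lp (fun _ : α => ℝ) 2) :
    Summable fun i => v i ^ 2 := by
  simpa [sq] using lp.summable_inner (𝕜 := ℝ) v v

instance : Nontrivial ℓ² :=
  nontrivial_of_ne (lp.single 2 0 (1 : ℝ)) 0 <| norm_ne_zero_iff.mp <| by
    simp [lp.norm_single]

section Head

variable (m : ℕ)

noncomputable def seqHead : ℓ² →L[ℝ] EuclideanSpace ℝ (Fin m) :=
  (EuclideanSpace.equiv (Fin m) ℝ).symm.toContinuousLinearMap.comp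
    (ContinuousLinearMap.pi fun j => lp.evalCLM ℝ (fun _ : ℕ => ℝ) 2 (j : ℕ))

@[simp]
theorem seqHead_apply (v : ℓ²) (j : Fin m) : seqHead m v j = v j := rfl

theorem memℓp_extendByZero (x : EuclideanSpace ℝ (Fin m)) :
    Memℓp (fun k => if h : k < m then x ⟨k, h⟩ else 0) 2 :=
  (memℓp_zero <| (Set.finite_Iio m).subset fun k hk => by
    by_contra h; exact hk (dif_neg h)).of_exponent_ge (by simp)

noncomputable def seqOfHead : EuclideanSpace ℝ (Fin m) →L[ℝ] ℓ² :=
  LinearMap.toContinuousLinearMap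
    { toFun := fun x => ⟨_, memℓp_extendByZero m x⟩
      map_add' := fun x y => lp.ext <| funext fun k => by
        rw [lp.coeFn_add, Pi.add_apply]
        by_cases h : k < m <;> simp [h]
      map_smul' := fun c x => lp.ext <| funext fun k => by
        by_cases h : k < m <;> simp [h] }

theorem seqOfHead_apply (x : EuclideanSpace ℝ (Fin m)) (k : ℕ) :
    seqOfHead m x k = if h : k < m then x ⟨k, h⟩ else 0 := rfl

@[simp]
theorem seqOfHead_apply_fin (x : EuclideanSpace ℝ (Fin m)) (j : Fin m) :
    seqOfHead m x j = x j := by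
  simp [seqOfHead_apply]

theorem seqOfHead_apply_of_le (x : EuclideanSpace ℝ (Fin m)) {k : ℕ} (hk : m ≤ k) :
    seqOfHead m x k = 0 := by
  simp [seqOfHead_apply, hk.not_gt]

@[simp]
theorem seqHead_seqOfHead (x : EuclideanSpace ℝ (Fin m)) : seqHead m (seqOfHead m x) = x := by
  ext j; simp

theorem ext_seqHead {v w : ℓ²} (hhead : seqHead m v = seqHead m w)
    (htail : ∀ k, m ≤ k → v k = w k) : v = w := by
  refine lp.ext <| funext fun k => ?_
  rcases lt_or_ge k m with h | h
  · simpa using congrArg (· ⟨k, h⟩) hhead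
  · exact htail k h

theorem eq_seqOfHead {w : ℓ²} {x : EuclideanSpace ℝ (Fin m)} (hhead : ∀ j : Fin m, w j = x j)
    (htail : ∀ k, m ≤ k → w k = 0) : w = seqOfHead m x :=
  ext_seqHead m (by ext j; simpa using hhead j) fun k hk => by
    rw [htail k hk, seqOfHead_apply_of_le m x hk]

theorem seqHead_single {k : ℕ} (hk : m ≤ k) (c : ℝ) : seqHead m (lp.single 2 k c) = 0 := by
  ext j
  simp [show (j : ℕ) ≠ k by omega]

theorem norm_sq_eq_norm_seqHead_sq_add_tsum (v : ℓ²) :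
    ‖v‖ ^ 2 = ‖seqHead m v‖ ^ 2 + ∑' k, v (k + m) ^ 2 := by
  rw [lp.norm_sq_eq_tsum_sq, ← (lp.summable_sq v).sum_add_tsum_nat_add m,
    EuclideanSpace.real_norm_sq_eq, ← Fin.sum_univ_eq_sum_range]
  simp

theorem norm_seqOfHead (x : EuclideanSpace ℝ (Fin m)) : ‖seqOfHead m x‖ = ‖x‖ := by
  have := norm_sq_eq_norm_seqHead_sq_add_tsum m (seqOfHead m x)
  simp only [seqHead_seqOfHead, seqOfHead_apply_of_le m x (Nat.le_add_left m _)] at this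
  simpa [sq_eq_sq₀ (norm_nonneg _) (norm_nonneg _)] using this

noncomputable def headProj : ℓ² →L[ℝ] ℓ² := (seqOfHead m).comp (seqHead m)

theorem headProj_apply (v : ℓ²) (k : ℕ) : headProj m v k = if k < m then v k else 0 := by
  simp [headProj, seqOfHead_apply]

end Head

structure IsBlockDiagonal (m : ℕ) (T : ℓ² →L[ℝ] ℓ²)
    (B : EuclideanSpace ℝ (Fin m) →L[ℝ] EuclideanSpace ℝ (Fin m)) (a : ℕ → ℝ) : Prop where
  head : ∀ v, seqHead m (T v) = B (seqHead m v)
  tail : ∀ v k, m ≤ k → T v k = a k * v k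

namespace IsBlockDiagonal

variable {m : ℕ} {T : ℓ² →L[ℝ] ℓ²}
  {B : EuclideanSpace ℝ (Fin m) →L[ℝ] EuclideanSpace ℝ (Fin m)} {a : ℕ → ℝ}
  (hT : IsBlockDiagonal m T B a)
include hT

theorem apply_seqOfHead (x : EuclideanSpace ℝ (Fin m)) :
    T (seqOfHead m x) = seqOfHead m (B x) :=
  ext_seqHead m (by rw [hT.head, seqHead_seqOfHead, seqHead_seqOfHead]) fun k hk => by
    rw [hT.tail _ k hk, seqOfHead_apply_of_le m _ hk, seqOfHead_apply_of_le m _ hk, mul_zero]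

theorem apply_single {k : ℕ} (hk : m ≤ k) (c : ℝ) :
    T (lp.single 2 k c) = a k • lp.single 2 k c :=
  ext_seqHead m (by rw [hT.head, map_smul, seqHead_single m hk, map_zero, smul_zero])
    fun n hn => by
      rw [hT.tail _ n hn, lp.coeFn_smul, Pi.smul_apply, smul_eq_mul]
      rcases eq_or_ne n k with rfl | h
      · rfl
      · rw [lp.coeFn_single, Pi.single_eq_of_ne h, mul_zero, mul_zero]

theorem bijMod_le_bijMod_head [NeZero m] : bijMod T ≤ bijMod B :=
  le_bijMod_of_finiteDimensional fun x => by
    simpa [norm_seqOfHead, hT.apply_seqOfHead] using bijMod_mul_norm_le T (seqOfHead m x)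

theorem bijMod_le_abs {k : ℕ} (hk : m ≤ k) : bijMod T ≤ |a k| := by
  simpa [hT.apply_single hk, norm_smul, lp.norm_single] using
    bijMod_mul_norm_le T (lp.single 2 k (1 : ℝ))

theorem mul_norm_le {c : ℝ} (hc : 0 ≤ c) (hcB : c ≤ bijMod B)
    (hca : ∀ k, m ≤ k → c ≤ |a k|) (v : ℓ²) : c * ‖v‖ ≤ ‖T v‖ := by
  have hhead : c * ‖seqHead m v‖ ≤ ‖B (seqHead m v)‖ :=
    (mul_le_mul_of_nonneg_right hcB (norm_nonneg _)).trans (bijMod_mul_norm_le B _)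
  have htail : ∑' k, (c * v (k + m)) ^ 2 ≤ ∑' k, T v (k + m) ^ 2 := by
    refine Summable.tsum_le_tsum (fun k => ?_)
      (((summable_nat_add_iff m).mpr (lp.summable_sq v)).mul_left (c ^ 2) |>.congr
        fun k => (mul_pow _ _ _).symm)
      ((summable_nat_add_iff m).mpr (lp.summable_sq (T v)))
    rw [hT.tail v _ (Nat.le_add_left m k), mul_pow, mul_pow, ← sq_abs (a _)]
    gcongr
    exact hca _ (Nat.le_add_left m k)
  rw [← pow_le_pow_iff_left₀ (by positivity) (norm_nonneg _) two_ne_zero, mul_pow,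
    norm_sq_eq_norm_seqHead_sq_add_tsum m, norm_sq_eq_norm_seqHead_sq_add_tsum m, hT.head,
    mul_add, ← tsum_mul_left]
  simp only [← mul_pow]
  gcongr

theorem surjective (hB : IsUnit B) {c : ℝ} (hc : 0 < c) (hca : ∀ k, m ≤ k → c ≤ |a k|) :
    Function.Surjective T := by
  intro y
  have hinv : ∀ k, |if m ≤ k then (a k)⁻¹ else 0| ≤ c⁻¹ := fun k => by
    split_ifs with hk
    · rw [abs_inv]; exact inv_anti₀ hc (hca k hk)
    · rw [abs_zero]; positivity
  set t : ℓ² := mulCLM _ c⁻¹ hinv y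
  have ht : seqHead m t = 0 := by
    ext j; simp [t, not_le.mpr j.isLt]
  refine ⟨seqOfHead m (Ring.inverse B (seqHead m y)) + t, ext_seqHead m ?_ fun k hk => ?_⟩
  · rw [hT.head, map_add, seqHead_seqOfHead, ht, add_zero]
    show (B * Ring.inverse B) _ = _
    rw [Ring.mul_inverse_cancel B hB]
    rfl
  · have hak : a k ≠ 0 := abs_pos.mp (hc.trans_le (hca k hk))
    rw [hT.tail _ k hk, lp.coeFn_add, Pi.add_apply, seqOfHead_apply_of_le m _ hk, zero_add]
    simp [t, hk, hak]

theorem bijMod_eq_min [NeZero m] (ha : 0 < ⨅ k, |a (m + k)|) :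
    bijMod T = min (bijMod B) (⨅ k, |a (m + k)|) := by
  refine le_antisymm (le_min hT.bijMod_le_bijMod_head
    (le_ciInf fun k => hT.bijMod_le_abs (Nat.le_add_right m k))) ?_
  have hca : ∀ k, m ≤ k → min (bijMod B) (⨅ k, |a (m + k)|) ≤ |a k| := fun k hk => by
    have := ciInf_le (f := fun n => |a (m + n)|) ⟨0, by rintro _ ⟨n, rfl⟩; positivity⟩ (k - m)
    rw [Nat.add_sub_cancel' hk] at this
    exact (min_le_right _ _).trans this
  rcases (bijMod_nonneg B).eq_or_lt with h | h
  · exact (min_le_left _ _).trans (h ▸ bijMod_nonneg T)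
  have hc : 0 < min (bijMod B) (⨅ k, |a (m + k)|) := lt_min h ha
  exact le_bijMod_of_surjective (hT.surjective (isUnit_of_bijMod_pos h) hc hca)
    (hT.mul_norm_le hc.le (min_le_left _ _) hca)

end IsBlockDiagonal

theorem isBlockDiagonal_sub_compress (m : ℕ) {a : ℕ → ℝ} {C : ℝ} (ha : ∀ k, |a k| ≤ C)
    (P : ℓ² →L[ℝ] ℓ²) :
    IsBlockDiagonal m
      (mulCLM a C ha - P - (headProj m).comp ((mulCLM a C ha - P).comp (headProj m)) + P)
      ((seqHead m).comp (P.comp (seqOfHead m))) a where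
  head v := by
    ext j
    simp [headProj]
  tail v k hk := by
    simp [headProj_apply, hk.not_gt]

/-- Let `(a k)` converge to `r ≠ 0` with `a k ≠ 0` for `k ≥ m`, and let
`𝒫 : ℓ²(ℕ) → ℓ²(ℕ)` be bounded linear. Then the operators `G` (given by
`(G v) k = a k * v k − (𝒫 v) k`), `𝒫_m = pr_m ∘ 𝒫 ∘ π_{ℝᵐ}` and
`G_m = pr_m ∘ G ∘ pr_m` are bounded (i.e. exist as continuous linear maps,
characterized by the listed formulas, where `w` is the truncation of the argument
to its first `m` coordinates), and
`|λ(𝒫) − min {λ(𝒫_m), inf_{k ≥ m} |a k|}| ≤ ‖G − G_m‖`. -/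
theorem bijMod_finite_dim_approx (m : ℕ) (hm : 1 < m) (a : ℕ → ℝ) (r : ℝ)
    (hr : r ≠ 0) (ha : Filter.Tendsto a Filter.atTop (nhds r))
    (hak : ∀ k, m ≤ k → a k ≠ 0)
    (P : lp (fun _ : ℕ => ℝ) 2 →L[ℝ] lp (fun _ : ℕ => ℝ) 2) :
    ∃ (G Gm : lp (fun _ : ℕ => ℝ) 2 →L[ℝ] lp (fun _ : ℕ => ℝ) 2)
      (Pm : EuclideanSpace ℝ (Fin m) →L[ℝ] EuclideanSpace ℝ (Fin m)),
      (∀ (v : lp (fun _ : ℕ => ℝ) 2) (k : ℕ),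
        (G v : ∀ _ : ℕ, ℝ) k = a k * (v : ∀ _ : ℕ, ℝ) k - (P v : ∀ _ : ℕ, ℝ) k) ∧
      (∀ (x : EuclideanSpace ℝ (Fin m)) (w : lp (fun _ : ℕ => ℝ) 2),
        (∀ j : Fin m, (w : ∀ _ : ℕ, ℝ) j = x j) →
        (∀ k, m ≤ k → (w : ∀ _ : ℕ, ℝ) k = 0) →
        ∀ j : Fin m, Pm x j = (P w : ∀ _ : ℕ, ℝ) j) ∧
      (∀ (v w : lp (fun _ : ℕ => ℝ) 2),
        (∀ k, k < m → (w : ∀ _ : ℕ, ℝ) k = (v : ∀ _ : ℕ, ℝ) k) →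
        (∀ k, m ≤ k → (w : ∀ _ : ℕ, ℝ) k = 0) →
        ∀ k, (Gm v : ∀ _ : ℕ, ℝ) k =
          if k < m then (G w : ∀ _ : ℕ, ℝ) k else 0) ∧
      |bijMod P - min (bijMod Pm) (⨅ k : ℕ, |a (m + k)|)| ≤ ‖G - Gm‖ := by
  have : NeZero m := ⟨by omega⟩
  obtain ⟨C, hC⟩ := ha.abs.bddAbove_range
  have hCa : ∀ k, |a k| ≤ C := fun k => hC ⟨k, rfl⟩
  set G := mulCLM a C hCa - P
  set Gm := (headProj m).comp (G.comp (headProj m))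
  have hd : 0 < ⨅ k, |a (m + k)| :=
    iInf_abs_pos_of_tendsto (ha.comp ((Filter.tendsto_add_atTop_nat m).congr fun k => add_comm k m))
      hr fun k => hak _ (Nat.le_add_right m k)
  refine ⟨G, Gm, (seqHead m).comp (P.comp (seqOfHead m)), fun v k => rfl,
    fun x w hhead htail j => ?_, fun v w hhead htail k => ?_, ?_⟩
  · rw [eq_seqOfHead m hhead htail]; rfl
  · rw [eq_seqOfHead m (x := seqHead m v) (fun j => hhead j j.isLt) htail]
    simp [Gm, headProj, seqOfHead_apply]
  · rw [← (isBlockDiagonal_sub_compress m hCa P).bijMod_eq_min hd]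
    calc _ ≤ ‖P - (G - Gm + P)‖ := abs_bijMod_sub_bijMod_le _ _
      _ = ‖G - Gm‖ := by rw [show P - (G - Gm + P) = -(G - Gm) by abel, norm_neg]
end
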